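/- arXiv:2411.06342 — 5 statements merged into one kernel-verified Lean document; each statement's English description precedes it below -/
import Mathlib

section
/- An estimator of the inverse propensity score is perfectly calibrated for covariate balance (i.e., the balance integral vanishes for all square-integrable test functions h composed with the estimated propensity) if and only if the estimated propensity score equals, almost surely, the conditional expectation of the true propensity score given the estimated propensity score. -/
/-!
The balance integral is `∫ h(πn) · (π0/πn - 1)`. Testing it against indicators of the events
`{πn ∈ A}` and, conversely, pulling the `σ(πn)`-measurable factor `h(πn)` out of a conditional
expectation shows that it vanishes for every admissible `h` exactly when
`E[π0/πn - 1 | πn] = 0`. Since `1/πn` is `σ(πn)`-measurable, this conditional expectation is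
`E[π0 | πn]/πn - 1`, which vanishes iff `πn = E[π0 | πn]`.
-/

open MeasureTheory Filter

theorem forall_integral_comp_mul_eq_zero_iff {Ω β : Type*} [MeasurableSpace Ω]
    [mβ : MeasurableSpace β] {μ : Measure Ω} [IsFiniteMeasure μ] {X : Ω → β} {Y : Ω → ℝ}
    (hX : Measurable X) (hY : MemLp Y 2 μ) :
    (∀ h : β → ℝ, Measurable h → MemLp (fun ω => h (X ω)) 2 μ → ∫ ω, h (X ω) * Y ω ∂μ = 0) ↔
      μ[Y | mβ.comap X] =ᵐ[μ] 0 := by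
  constructor
  · intro hbal
    refine (ae_eq_condExp_of_forall_setIntegral_eq hX.comap_le (hY.integrable one_le_two)
      (fun _ _ _ => integrableOn_zero) ?_ aestronglyMeasurable_zero).symm
    rintro _ ⟨A, hA, rfl⟩ -
    have hA1 : Measurable (A.indicator (1 : β → ℝ)) := measurable_one.indicator hA
    have hmul : (fun ω => A.indicator 1 (X ω) * Y ω) = (X ⁻¹' A).indicator Y := by
      funext ω
      by_cases hω : X ω ∈ A <;> simp [hω]
    have hind := hbal _ hA1 <| MemLp.of_bound (hA1.comp hX).aestronglyMeasurable 1 <|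
      ae_of_all _ fun ω => (norm_indicator_le_norm_self _ _).trans_eq norm_one
    rw [hmul, integral_indicator (hX hA)] at hind
    simp [hind]
  · intro hcond h hh hhX
    have hhm : StronglyMeasurable[mβ.comap X] (fun ω => h (X ω)) :=
      (hh.comp (comap_measurable X)).stronglyMeasurable
    calc ∫ ω, h (X ω) * Y ω ∂μ = ∫ ω, (μ[(fun ω => h (X ω)) * Y | mβ.comap X]) ω ∂μ :=
          (integral_condExp hX.comap_le).symm
      _ = ∫ ω, h (X ω) * (μ[Y | mβ.comap X]) ω ∂μ :=
          integral_congr_ae (condExp_mul_of_stronglyMeasurable_left hhm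
            (hhX.integrable_mul hY) (hY.integrable one_le_two))
      _ = 0 := integral_eq_zero_of_ae (hcond.mono fun ω hω => by simp [hω])

theorem condExp_div_sub_one_ae_eq_zero_iff {Ω : Type*} {m m₀ : MeasurableSpace Ω}
    {μ : Measure Ω} [IsFiniteMeasure μ] (hm : m ≤ m₀) {Z w : Ω → ℝ}
    (hw : StronglyMeasurable[m] w) (hw0 : ∀ ω, w ω ≠ 0) (hZ : Integrable Z μ)
    (hZw : Integrable (fun ω => Z ω / w ω) μ) :
    μ[fun ω => Z ω / w ω - 1 | m] =ᵐ[μ] 0 ↔ w =ᵐ[μ] μ[Z | m] := by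
  have hpull : μ[fun ω => Z ω / w ω - 1 | m] =ᵐ[μ] fun ω => μ[Z | m] ω / w ω - 1 := by
    have hZw' : Integrable (w⁻¹ * Z) μ := by
      simp only [div_eq_inv_mul] at hZw
      exact hZw
    have hfun : (fun ω => Z ω / w ω - 1) = w⁻¹ * Z - fun _ => 1 := by
      simp only [div_eq_inv_mul]; rfl
    rw [hfun]
    filter_upwards [condExp_sub hZw' (integrable_const 1) m,
      condExp_mul_of_stronglyMeasurable_left hw.measurable.inv.stronglyMeasurable hZw' hZ]
      with ω hsub hmul
    rw [hsub, Pi.sub_apply, hmul, condExp_const hm]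
    simp [div_eq_inv_mul]
  have hpoint : ∀ ω, μ[Z | m] ω / w ω - 1 = 0 ↔ w ω = μ[Z | m] ω := fun ω => by
    rw [sub_eq_zero, div_eq_one_iff_eq (hw0 ω), eq_comm]
  calc μ[fun ω => Z ω / w ω - 1 | m] =ᵐ[μ] 0
      ↔ (fun ω => μ[Z | m] ω / w ω - 1) =ᵐ[μ] 0 := ⟨hpull.symm.trans, hpull.trans⟩
    _ ↔ w =ᵐ[μ] μ[Z | m] := by simp only [EventuallyEq, Pi.zero_apply, hpoint]

theorem isotonic_perfect_calibration_iff_general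
    {Ω : Type*} [MeasurableSpace Ω] (P : Measure Ω) [IsProbabilityMeasure P]
    (π0 πn : Ω → ℝ) (hπ0meas : Measurable π0) (hπnmeas : Measurable πn)
    (hπ0range : ∀ ω, 0 < π0 ω ∧ π0 ω < 1)
    (c : ℝ) (hc : 0 < c) (hπnlb : ∀ ω, c ≤ πn ω) :
    (∀ h : ℝ → ℝ, Measurable h → MemLp (fun ω => h (πn ω)) 2 P →
        ∫ ω, h (πn ω) * (π0 ω / πn ω - 1) ∂P = 0) ↔
      πn =ᵐ[P] P[π0 | MeasurableSpace.comap πn Real.measurableSpace] := by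
  have hπn_pos : ∀ ω, 0 < πn ω := fun ω => hc.trans_le (hπnlb ω)
  have hπ0_int : Integrable π0 P :=
    .of_bound hπ0meas.aestronglyMeasurable 1 <| ae_of_all _ fun ω => by
      rw [Real.norm_eq_abs, abs_le]
      constructor <;> linarith [hπ0range ω]
  have hratio_meas : Measurable fun ω => π0 ω / πn ω := hπ0meas.div hπnmeas
  have hratio_bdd : ∀ ω, ‖π0 ω / πn ω‖ ≤ 1 / c := fun ω => by
    rw [Real.norm_of_nonneg (div_pos (hπ0range ω).1 (hπn_pos ω)).le]
    exact div_le_div₀ zero_le_one (hπ0range ω).2.le hc (hπnlb ω)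
  have hresidual_memLp : MemLp (fun ω => π0 ω / πn ω - 1) 2 P :=
    .of_bound (hratio_meas.sub measurable_const).aestronglyMeasurable (1 / c + 1) <|
      ae_of_all _ fun ω => (norm_sub_le _ _).trans (by simpa using hratio_bdd ω)
  exact (forall_integral_comp_mul_eq_zero_iff hπnmeas hresidual_memLp).trans <|
    condExp_div_sub_one_ae_eq_zero_iff hπnmeas.comap_le
      (comap_measurable πn).stronglyMeasurable (fun ω => (hπn_pos ω).ne') hπ0_int
      (.of_bound hratio_meas.aestronglyMeasurable _ (ae_of_all _ hratio_bdd))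

/-- An estimator `πn⁻¹` of the inverse propensity score is perfectly
calibrated for covariate balance (the balance integral vanishes for all square-integrable
test functions `h` composed with `πn`) if and only if `πn` equals, `P`-almost surely,
the conditional expectation of the true propensity score `π0` given `πn`. -/
theorem isotonic_perfect_calibration_iff
    {Ω : Type*} [MeasurableSpace Ω] (P : Measure Ω) [IsProbabilityMeasure P]
    (π0 πn : Ω → ℝ) (hπ0meas : Measurable π0) (hπnmeas : Measurable πn)
    (hπ0range : ∀ ω, 0 < π0 ω ∧ π0 ω < 1)
    (c : ℝ) (hc : 0 < c) (hπnlb : ∀ ω, c ≤ πn ω) (hπnub : ∀ ω, πn ω ≤ 1) :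
    (∀ h : ℝ → ℝ, Measurable h → MemLp (fun ω => h (πn ω)) 2 P →
        ∫ ω, h (πn ω) * (π0 ω / πn ω - 1) ∂P = 0) ↔
      πn =ᵐ[P] P[π0 | MeasurableSpace.comap πn Real.measurableSpace] :=
  isotonic_perfect_calibration_iff_general P π0 πn hπ0meas hπnmeas hπ0range c hc hπnlb
end

section
/- Let f_n be the piecewise-constant solution to the antitonic (isotonic with reversed order) least-squares-type empirical risk minimization with loss 1(A_i = 1)·θ(x_i)² − 2θ(x_i). Then for every function h: ℝ → ℝ that is constant on the level sets of f_n, the empirical balancing equation (1/n)Σ_i h(f_n(x_i))·(1(A_i = 1)·f_n(x_i) − 1) = 0 holds, provided f_n takes only finite values at the data points. -/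
open Finset

/-!
Perturbing `f` to `t ↦ f t + ε * ψ (f t)` with `ψ` 1-Lipschitz and `|ε| ≤ 1` keeps it antitone,
so minimality of `f` makes the derivative in `ε` at `0` of the empirical risk vanish:
`∑ ψ (f xᵢ) * (wᵢ * f xᵢ - 1) = 0`. Choosing for `ψ` a tent peaked at one value of `f` on the
data and vanishing at all the others isolates the sum over each level set, which therefore
vanishes; grouping the balancing sum by level sets gives the claim.
-/

theorem Antitone.add_mul_comp_of_lipschitzWith_one {f ψ : ℝ → ℝ} (hf : Antitone f)
    (hψ : LipschitzWith 1 ψ) {ε : ℝ} (hε : |ε| ≤ 1) :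
    Antitone fun t => f t + ε * ψ (f t) := by
  intro s t hst
  have hle : f t ≤ f s := hf hst
  have hψle : |ψ (f t) - ψ (f s)| ≤ f s - f t := by
    simpa [Real.dist_eq, abs_sub_comm, abs_of_nonneg (sub_nonneg.2 hle)]
      using hψ.dist_le_mul (f t) (f s)
  have : ε * (ψ (f t) - ψ (f s)) ≤ f s - f t :=
    calc ε * (ψ (f t) - ψ (f s)) ≤ |ε| * |ψ (f t) - ψ (f s)| := by
          rw [← abs_mul]; exact le_abs_self _
      _ ≤ 1 * (f s - f t) := by gcongr
      _ = f s - f t := one_mul _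
  linarith

theorem exists_pos_le_dist_of_ne {ι : Type*} [Finite ι] (y : ι → ℝ) (c : ℝ) :
    ∃ δ > 0, ∀ i, y i ≠ c → δ ≤ dist (y i) c := by
  have hclosed : IsClosed (Set.range y \ {c}) := (Set.finite_range y).sdiff.isClosed
  obtain ⟨δ, hδ, hball⟩ :=
    Metric.mem_nhds_iff.1 (hclosed.isOpen_compl.mem_nhds fun h => h.2 rfl)
  exact ⟨δ, hδ, fun i hi => not_lt.1 fun hlt => hball hlt ⟨Set.mem_range_self i, hi⟩⟩

theorem sum_mul_mul_sub_one_eq_zero_of_isLocalMin {ι : Type*} [Fintype ι] (w y d : ι → ℝ)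
    (hmin : IsLocalMin (fun ε => ∑ i, (w i * (y i + ε * d i) ^ 2 - 2 * (y i + ε * d i))) 0) :
    ∑ i, d i * (w i * y i - 1) = 0 := by
  have hderiv : HasDerivAt (fun ε => ∑ i, (w i * (y i + ε * d i) ^ 2 - 2 * (y i + ε * d i)))
      (∑ i, 2 * (d i * (w i * y i - 1))) 0 := by
    refine HasDerivAt.fun_sum fun i _ => ?_
    have hlin : HasDerivAt (fun ε => y i + ε * d i) (d i) 0 := by
      simpa using ((hasDerivAt_id (0 : ℝ)).mul_const (d i)).const_add (y i)
    exact (((hlin.pow 2).const_mul (w i)).sub (hlin.const_mul 2)).congr_deriv (by simp; ring)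
  rw [← mul_sum] at hderiv
  simpa using hmin.hasDerivAt_eq_zero hderiv

section Fibers

variable {ι : Type*} [Fintype ι] {y P : ι → ℝ}

theorem sum_filter_eq_zero_of_forall_lipschitzWith_one
    (H : ∀ ψ : ℝ → ℝ, LipschitzWith 1 ψ → ∑ i, ψ (y i) * P i = 0) (c : ℝ) :
    ∑ i with y i = c, P i = 0 := by
  obtain ⟨δ, hδ, hsep⟩ := exists_pos_le_dist_of_ne y c
  have htent : LipschitzWith 1 fun u : ℝ => max (δ - dist u c) 0 := by
    simpa using ((LipschitzWith.const δ).sub (LipschitzWith.dist_left c)).max_const 0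
  have hval : ∀ i, max (δ - dist (y i) c) 0 * P i = δ * if y i = c then P i else 0 := by
    intro i
    by_cases hi : y i = c
    · simp [hi, hδ.le]
    · simp [hi, hsep i hi]
  have := H _ htent
  simp_rw [hval, ← mul_sum, ← sum_filter] at this
  exact (mul_eq_zero.1 this).resolve_left hδ.ne'

theorem sum_comp_mul_eq_zero_of_forall_lipschitzWith_one
    (H : ∀ ψ : ℝ → ℝ, LipschitzWith 1 ψ → ∑ i, ψ (y i) * P i = 0) (h : ℝ → ℝ) :
    ∑ i, h (y i) * P i = 0 := by
  rw [← sum_fiberwise_of_maps_to fun i _ => mem_image_of_mem y (mem_univ i)]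
  refine sum_eq_zero fun c _ => ?_
  rw [sum_congr rfl fun i hi => by rw [(mem_filter.1 hi).2], ← mul_sum,
    sum_filter_eq_zero_of_forall_lipschitzWith_one H c, mul_zero]

end Fibers

theorem antitonic_erm_empirical_balancing_general
    (n : ℕ) (x : Fin n → ℝ) (A : Fin n → Bool)
    (f : ℝ → ℝ) (hf : Antitone f)
    (hmin : ∀ θ : ℝ → ℝ, Antitone θ →
      (∑ i, ((if A i then (1 : ℝ) else 0) * f (x i) ^ 2 - 2 * f (x i))) ≤
        ∑ i, ((if A i then (1 : ℝ) else 0) * θ (x i) ^ 2 - 2 * θ (x i))) :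
    ∀ h : ℝ → ℝ,
      (1 / (n : ℝ)) * ∑ i, h (f (x i)) * ((if A i then (1 : ℝ) else 0) * f (x i) - 1) = 0 := by
  intro h
  have hfirst : ∀ ψ : ℝ → ℝ, LipschitzWith 1 ψ →
      ∑ i, ψ (f (x i)) * ((if A i then (1 : ℝ) else 0) * f (x i) - 1) = 0 := by
    intro ψ hψ
    refine sum_mul_mul_sub_one_eq_zero_of_isLocalMin _ (f ∘ x) (ψ ∘ f ∘ x) ?_
    filter_upwards [Metric.closedBall_mem_nhds (0 : ℝ) one_pos] with ε hε
    rw [mem_closedBall_zero_iff, Real.norm_eq_abs] at hε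
    simpa using hmin _ (hf.add_mul_comp_of_lipschitzWith_one hψ hε)
  rw [sum_comp_mul_eq_zero_of_forall_lipschitzWith_one hfirst h, mul_zero]

/-- Let `f` be a (finite-valued) solution of the antitonic empirical risk
minimization with loss `1(Aᵢ = 1)·θ(xᵢ)² − 2θ(xᵢ)`.  Then for every `h : ℝ → ℝ`
(automatically constant on level sets of `f` after composition) the empirical balancing
equation `(1/n) Σᵢ h(f(xᵢ))·(1(Aᵢ = 1)·f(xᵢ) − 1) = 0` holds. -/
theorem antitonic_erm_empirical_balancing
    (n : ℕ) (hn : 0 < n) (x : Fin n → ℝ) (A : Fin n → Bool)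
    (f : ℝ → ℝ) (hf : Antitone f)
    (hmin : ∀ θ : ℝ → ℝ, Antitone θ →
      (∑ i, ((if A i then (1 : ℝ) else 0) * f (x i) ^ 2 - 2 * f (x i))) ≤
        ∑ i, ((if A i then (1 : ℝ) else 0) * θ (x i) ^ 2 - 2 * θ (x i))) :
    ∀ h : ℝ → ℝ,
      (1 / (n : ℝ)) * ∑ i, h (f (x i)) * ((if A i then (1 : ℝ) else 0) * f (x i) - 1) = 0 :=
  antitonic_erm_empirical_balancing_general n x A f hf hmin
end

section
/- Binning preserves bounded variation up to a factor of 3: let g: [−M, M] → ℝ have total variation norm at most K, let X be a random variable taking values in [−M, M], and let {B_t} be a partition of [−M, M] into intervals. Then the function t ↦ E[g(X) | X ∈ B_{t}], viewed as a function of the representative point (constant on each bin, with bins ordered as intervals), has total variation norm at most 3K. -/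
/-!
Each bin value is an average of `g` over the bin, so it lies in the closed convex hull of
`g '' B`, whose diameter is at most the variation of `g` on `B`. For `x ≤ y` in different bins
the jump of the binned function is therefore at most the variation of `g` over the hull
`[inf B(x), sup B(y)]`; as the bins are ordered, summing these along a partition counts every bin
at most twice and every gap once, whence `V(gbar) ≤ 2 V(g)`. Finally `gbar (-M)` is within `V(g)`
of `g (-M)`, which gives `|gbar (-M)| + V(gbar) ≤ |g (-M)| + 3 V(g) ≤ 3K`.
-/

open MeasureTheory Set

section Variation

variable {α E : Type*} [LinearOrder α]

theorem eVariationOn.ediam_image_le [PseudoEMetricSpace E] (f : α → E) (s : Set α) :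
    Metric.ediam (f '' s) ≤ eVariationOn f s :=
  Metric.ediam_image_le_iff.2 fun _ hx _ hy => eVariationOn.edist_le f hx hy

theorem BoundedVariationOn.dist_le_of_mem_closure_convexHull [SeminormedAddCommGroup E]
    [NormedSpace ℝ E] {f : α → E} {s : Set α} (hf : BoundedVariationOn f s) {c d : E}
    (hc : c ∈ closure (convexHull ℝ (f '' s))) (hd : d ∈ closure (convexHull ℝ (f '' s))) :
    dist c d ≤ (eVariationOn f s).toReal := by
  rw [dist_edist]
  refine ENNReal.toReal_mono hf ?_
  calc edist c d ≤ Metric.ediam (closure (convexHull ℝ (f '' s))) :=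
        Metric.edist_le_ediam_of_mem hc hd
    _ = Metric.ediam (f '' s) := by rw [Metric.ediam_closure, convexHull_ediam]
    _ ≤ eVariationOn f s := eVariationOn.ediam_image_le f s

theorem eVariationOn_inter_Icc_le_of_dist_le_sub [PseudoMetricSpace E] {f : α → E} {Φ : α → ℝ}
    {s : Set α} (h : ∀ x ∈ s, ∀ y ∈ s, x ≤ y → dist (f x) (f y) ≤ Φ y - Φ x) {a b : α}
    (ha : a ∈ s) (hb : b ∈ s) :
    eVariationOn f (s ∩ Icc a b) ≤ ENNReal.ofReal (Φ b - Φ a) := by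
  have hΦ : MonotoneOn Φ s := fun x hx y hy hxy =>
    sub_nonneg.1 (dist_nonneg.trans (h x hx y hy hxy))
  rw [← hΦ.eVariationOn_eq ha hb]
  refine iSup_le fun ⟨n, u, hu, hus⟩ => ?_
  calc ∑ i ∈ Finset.range n, edist (f (u (i + 1))) (f (u i))
      ≤ ∑ i ∈ Finset.range n, edist (Φ (u (i + 1))) (Φ (u i)) := by
        refine Finset.sum_le_sum fun i _ => ?_
        rw [edist_comm, edist_dist, edist_dist]
        exact ENNReal.ofReal_le_ofReal ((h _ (hus i).1 _ (hus (i + 1)).1 (hu i.le_succ)).trans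
          ((le_abs_self _).trans_eq (Real.dist_eq _ _).symm))
    _ ≤ eVariationOn Φ (s ∩ Icc a b) := eVariationOn.sum_le hu hus

end Variation

theorem setAverage_mem_closure_convexHull_image {α E : Type*} [MeasurableSpace α]
    [NormedAddCommGroup E] [NormedSpace ℝ E] [CompleteSpace E] {μ : Measure α} {f : α → E}
    {s : Set α} (hs : MeasurableSet s) (h0 : μ s ≠ 0) (hμs : μ s ≠ ⊤) (hf : IntegrableOn f s μ) :
    ⨍ x in s, f x ∂μ ∈ closure (convexHull ℝ (f '' s)) :=
  (convex_convexHull ℝ _).set_average_mem_closure h0 hμs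
    ((ae_restrict_mem hs).mono fun _ hx => subset_convexHull ℝ _ (mem_image_of_mem f hx)) hf

section Binning

variable {ι α E : Type*} [ConditionallyCompleteLinearOrder α] {B : ι → Set α} {b : α → ι}
  {l r : α}

theorem csInf_mem_Icc_of_subset {s : Set α} (hs : s.Nonempty) (hsub : s ⊆ Icc l r) :
    sInf s ∈ Icc l r :=
  ⟨le_csInf hs fun _ hx => (hsub hx).1,
    (csInf_le (bddBelow_Icc.mono hsub) hs.some_mem).trans (hsub hs.some_mem).2⟩

theorem csSup_mem_Icc_of_subset {s : Set α} (hs : s.Nonempty) (hsub : s ⊆ Icc l r) :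
    sSup s ∈ Icc l r :=
  ⟨(hsub hs.some_mem).1.trans (le_csSup (bddAbove_Icc.mono hsub) hs.some_mem),
    csSup_le hs fun _ hx => (hsub hx).2⟩

theorem csSup_le_csInf_of_ne
    (hBord : ∀ i j, i ≠ j → (∀ x ∈ B i, ∀ y ∈ B j, x < y) ∨ (∀ x ∈ B i, ∀ y ∈ B j, y < x))
    (hmem : ∀ x ∈ Icc l r, x ∈ B (b x)) {x y : α} (hx : x ∈ Icc l r) (hy : y ∈ Icc l r)
    (hxy : x ≤ y) (hb : b x ≠ b y) : sSup (B (b x)) ≤ sInf (B (b y)) := by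
  have hlt : ∀ p ∈ B (b x), ∀ q ∈ B (b y), p < q :=
    (hBord _ _ hb).resolve_right fun h => (h x (hmem x hx) y (hmem y hy)).not_ge hxy
  exact csSup_le ⟨x, hmem x hx⟩ fun p hp => le_csInf ⟨y, hmem y hy⟩ fun q hq => (hlt p hp q hq).le

/-- Equal to `2 V(l, inf B) + V(inf B, sup B)` for the bin `B` of `x`, with `V` the variation of
`g`; from one bin to a later one it grows by the variation over the hull of both bins plus that
over the gap between them, which dominates the jump between the two bin values. -/
noncomputable def binPotential [PseudoEMetricSpace E] (g : α → E) (l r : α) (B : ι → Set α)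
    (b : α → ι) (x : α) : ℝ :=
  variationOnFromTo g (Icc l r) l (sInf (B (b x))) +
    variationOnFromTo g (Icc l r) l (sSup (B (b x)))

theorem binPotential_nonneg [PseudoEMetricSpace E] {g : α → E} (hBsub : ∀ i, B i ⊆ Icc l r)
    (hmem : ∀ x ∈ Icc l r, x ∈ B (b x)) {x : α} (hx : x ∈ Icc l r) : 0 ≤ binPotential g l r B b x :=
  add_nonneg
    (variationOnFromTo.nonneg_of_le _ _ (csInf_mem_Icc_of_subset ⟨x, hmem x hx⟩ (hBsub _)).1)
    (variationOnFromTo.nonneg_of_le _ _ (csSup_mem_Icc_of_subset ⟨x, hmem x hx⟩ (hBsub _)).1)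

theorem binPotential_le_two_mul [PseudoEMetricSpace E] {g : α → E}
    (hg : BoundedVariationOn g (Icc l r)) (x : α) :
    binPotential g l r B b x ≤ 2 * (eVariationOn g (Icc l r)).toReal := by
  have h1 := (le_abs_self _).trans (variationOnFromTo.abs_le_eVariationOn hg (a := l)
    (b := sInf (B (b x))))
  have h2 := (le_abs_self _).trans (variationOnFromTo.abs_le_eVariationOn hg (a := l)
    (b := sSup (B (b x))))
  unfold binPotential
  linarith

variable [SeminormedAddCommGroup E] [NormedSpace ℝ E] {g : α → E} {F : ι → E}

theorem dist_le_binPotential_sub (hg : BoundedVariationOn g (Icc l r))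
    (hBsub : ∀ i, B i ⊆ Icc l r)
    (hBord : ∀ i j, i ≠ j → (∀ x ∈ B i, ∀ y ∈ B j, x < y) ∨ (∀ x ∈ B i, ∀ y ∈ B j, y < x))
    (hmem : ∀ x ∈ Icc l r, x ∈ B (b x)) (hF : ∀ i, F i ∈ closure (convexHull ℝ (g '' B i)))
    {x y : α} (hx : x ∈ Icc l r) (hy : y ∈ Icc l r) (hxy : x ≤ y) :
    dist (F (b x)) (F (b y)) ≤ binPotential g l r B b y - binPotential g l r B b x := by
  by_cases hb : b x = b y
  · simp [binPotential, hb]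
  have hsep := csSup_le_csInf_of_ne hBord hmem hx hy hxy hb
  have hxB := hmem x hx
  have hyB := hmem y hy
  have hBx := hBsub (b x)
  have hBy := hBsub (b y)
  have hlox := csInf_mem_Icc_of_subset ⟨x, hxB⟩ hBx
  have hhix := csSup_mem_Icc_of_subset ⟨x, hxB⟩ hBx
  have hloy := csInf_mem_Icc_of_subset ⟨y, hyB⟩ hBy
  have hhiy := csSup_mem_Icc_of_subset ⟨y, hyB⟩ hBy
  have hlo_le_hi : ∀ i, ∀ p ∈ B i, sInf (B i) ≤ p ∧ p ≤ sSup (B i) := fun i p hp =>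
    ⟨csInf_le (bddBelow_Icc.mono (hBsub i)) hp, le_csSup (bddAbove_Icc.mono (hBsub i)) hp⟩
  have hx' := hlo_le_hi _ x hxB
  have hy' := hlo_le_hi _ y hyB
  have hhull : B (b x) ∪ B (b y) ⊆ Icc l r ∩ Icc (sInf (B (b x))) (sSup (B (b y))) := by
    rintro p (hp | hp)
    · have := hlo_le_hi _ p hp
      exact ⟨hBx hp, by order, by order⟩
    · have := hlo_le_hi _ p hp
      exact ⟨hBy hp, by order, by order⟩
  have hF_hull : ∀ i, B i ⊆ Icc l r ∩ Icc (sInf (B (b x))) (sSup (B (b y))) →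
      F i ∈ closure (convexHull ℝ (g '' (Icc l r ∩ Icc (sInf (B (b x))) (sSup (B (b y)))))) :=
    fun i hi => closure_mono (convexHull_mono (image_mono hi)) (hF i)
  have hdist : dist (F (b x)) (F (b y)) ≤
      variationOnFromTo g (Icc l r) (sInf (B (b x))) (sSup (B (b y))) := by
    rw [variationOnFromTo.eq_of_le _ _ (by order)]
    exact (hg.mono inter_subset_left).dist_le_of_mem_closure_convexHull
      (hF_hull _ (subset_union_left.trans hhull)) (hF_hull _ (subset_union_right.trans hhull))
  have hl : l ∈ Icc l r := left_mem_Icc.2 (hx.1.trans hx.2)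
  have hloc := hg.locallyBoundedVariationOn
  have h1 := variationOnFromTo.add hloc hl hlox hhiy
  have h2 := variationOnFromTo.add hloc hl hhix hloy
  have h3 := variationOnFromTo.nonneg_of_le g (Icc l r) hsep
  unfold binPotential
  linarith

theorem eVariationOn_binned_le_two_mul (hlr : l ≤ r) (hg : BoundedVariationOn g (Icc l r))
    (hBsub : ∀ i, B i ⊆ Icc l r)
    (hBord : ∀ i j, i ≠ j → (∀ x ∈ B i, ∀ y ∈ B j, x < y) ∨ (∀ x ∈ B i, ∀ y ∈ B j, y < x))
    (hmem : ∀ x ∈ Icc l r, x ∈ B (b x)) (hF : ∀ i, F i ∈ closure (convexHull ℝ (g '' B i))) :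
    eVariationOn (F ∘ b) (Icc l r) ≤ 2 * eVariationOn g (Icc l r) := by
  have hl : l ∈ Icc l r := left_mem_Icc.2 hlr
  have hr : r ∈ Icc l r := right_mem_Icc.2 hlr
  have hΦ := eVariationOn_inter_Icc_le_of_dist_le_sub (f := F ∘ b)
    (fun x hx y hy hxy => dist_le_binPotential_sub hg hBsub hBord hmem hF hx hy hxy) hl hr
  rw [inter_self] at hΦ
  calc eVariationOn (F ∘ b) (Icc l r)
      ≤ ENNReal.ofReal (binPotential g l r B b r - binPotential g l r B b l) := hΦ
    _ ≤ ENNReal.ofReal (2 * (eVariationOn g (Icc l r)).toReal) :=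
        ENNReal.ofReal_le_ofReal (by
          linarith [binPotential_nonneg hBsub hmem hl (g := g),
            binPotential_le_two_mul (B := B) (b := b) hg r])
    _ = 2 * eVariationOn g (Icc l r) := by
        rw [ENNReal.ofReal_mul zero_le_two, ENNReal.ofReal_toReal hg, ENNReal.ofReal_ofNat]

end Binning

theorem binning_preserves_bounded_variation_general
    {ι : Type*} (M K : ℝ) (hM : 0 < M)
    (g : ℝ → ℝ)
    (hgBV : BoundedVariationOn g (Set.Icc (-M) M))
    (hgK : |g (-M)| + (eVariationOn g (Set.Icc (-M) M)).toReal ≤ K)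
    (Q : Measure ℝ) [IsProbabilityMeasure Q]
    (hgint : Integrable g Q)
    (B : ι → Set ℝ) (b : ℝ → ι)
    (hBmeas : ∀ i, MeasurableSet (B i))
    (hBsub : ∀ i, B i ⊆ Set.Icc (-M) M)
    (hBord : ∀ i j, i ≠ j → (∀ x ∈ B i, ∀ y ∈ B j, x < y) ∨ (∀ x ∈ B i, ∀ y ∈ B j, y < x))
    (hBpos : ∀ i, 0 < Q (B i))
    (hmem : ∀ x ∈ Set.Icc (-M) M, x ∈ B (b x))
    (gbar : ℝ → ℝ)
    (hgbar : ∀ x, gbar x = (∫ y in B (b x), g y ∂Q) / (Q (B (b x))).toReal) :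
    |gbar (-M)| + (eVariationOn gbar (Set.Icc (-M) M)).toReal ≤ 3 * K := by
  have hMM : -M ≤ M := by linarith
  have hgbar_eq : gbar = (fun i => ⨍ y in B i, g y ∂Q) ∘ b := by
    funext x
    rw [hgbar, Function.comp_apply, setAverage_eq, smul_eq_mul, measureReal_def, div_eq_inv_mul]
  have hF : ∀ i, ⨍ y in B i, g y ∂Q ∈ closure (convexHull ℝ (g '' B i)) := fun i =>
    setAverage_mem_closure_convexHull_image (hBmeas i) (hBpos i).ne' (measure_ne_top Q _)
      hgint.integrableOn
  have hvar : (eVariationOn gbar (Icc (-M) M)).toReal ≤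
      2 * (eVariationOn g (Icc (-M) M)).toReal := by
    have h := eVariationOn_binned_le_two_mul hMM hgBV hBsub hBord hmem hF
    rw [← hgbar_eq] at h
    rw [← ENNReal.toReal_ofNat 2, ← ENNReal.toReal_mul]
    exact ENNReal.toReal_mono (ENNReal.mul_ne_top ENNReal.ofNat_ne_top hgBV) h
  have hstart : dist (gbar (-M)) (g (-M)) ≤ (eVariationOn g (Icc (-M) M)).toReal := by
    have hB := hmem (-M) (left_mem_Icc.2 hMM)
    rw [hgbar_eq]
    exact ((hgBV.mono (hBsub _)).dist_le_of_mem_closure_convexHull (hF _)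
      (subset_closure (subset_convexHull ℝ _ (mem_image_of_mem g hB)))).trans
      (ENNReal.toReal_mono hgBV (eVariationOn.mono g (hBsub _)))
  have habs := abs_sub_abs_le_abs_sub (gbar (-M)) (g (-M))
  rw [Real.dist_eq] at hstart
  linarith [abs_nonneg (g (-M))]

/-- Binning preserves bounded variation up to a factor of 3: if
`g : [−M, M] → ℝ` has total variation norm `|g(−M)| + V(g)` at most `K`, `Q` is the law of a
random variable with values in `[−M, M]`, and `{B i}` is a partition of `[−M, M]` into
ordered intervals of positive `Q`-mass, then the binned function
`x ↦ E_Q[g | B (b x)]` (constant on each bin) has total variation norm at most `3K`. -/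
theorem binning_preserves_bounded_variation
    {ι : Type*} (M K : ℝ) (hM : 0 < M)
    (g : ℝ → ℝ) (hgmeas : Measurable g)
    (hgBV : BoundedVariationOn g (Set.Icc (-M) M))
    (hgK : |g (-M)| + (eVariationOn g (Set.Icc (-M) M)).toReal ≤ K)
    (Q : Measure ℝ) [IsProbabilityMeasure Q]
    (hQsupp : Q (Set.Icc (-M) M)ᶜ = 0)
    (hgint : Integrable g Q)
    (B : ι → Set ℝ) (b : ℝ → ι)
    (hBmeas : ∀ i, MeasurableSet (B i))
    (hBsub : ∀ i, B i ⊆ Set.Icc (-M) M)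
    (hBint : ∀ i, (B i).OrdConnected)
    (hBord : ∀ i j, i ≠ j → (∀ x ∈ B i, ∀ y ∈ B j, x < y) ∨ (∀ x ∈ B i, ∀ y ∈ B j, y < x))
    (hBpos : ∀ i, 0 < Q (B i))
    (hmem : ∀ x ∈ Set.Icc (-M) M, x ∈ B (b x))
    (gbar : ℝ → ℝ)
    (hgbar : ∀ x, gbar x = (∫ y in B (b x), g y ∂Q) / (Q (B (b x))).toReal) :
    |gbar (-M)| + (eVariationOn gbar (Set.Icc (-M) M)).toReal ≤ 3 * K :=
  binning_preserves_bounded_variation_general M K hM g hgBV hgK Q hgint B b hBmeas hBsub hBord hBpos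
    hmem gbar hgbar
end

section
/- If the average calibration error δ_n² satisfies the self-bounding inequality δ_n² ≤ φ_n(δ_n) + Z_n, where Z_n = O_p(n^{-2/3}) and φ_n is a (random) nonnegative nondecreasing function whose expectation satisfies E[φ_n(δ)] ≤ C·n^{-1/2}·√δ·(1 + √δ/(√n δ²)) for all δ > 0, then δ_n² = O_p(n^{-2/3}). -/
/-!
On the event `|Zₙ| ≤ K_Z n^{-2/3}`, once `δₙ² > M⁴ n^{-2/3}` the noise is at most half of `δₙ²`,
so `δₙ² ≤ 2 φₙ(δₙ)`. Peel `{δₙ ≥ a}`, `a = M² n^{-1/3}`, into the dyadic shells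
`2ˢ a ≤ δₙ < 2ˢ⁺¹ a`: on the `s`-th shell monotonicity gives `4ˢ a² ≤ 2 φₙ(2ˢ⁺¹ a)`, and Markov's
inequality with the bound on `E φₙ` makes its probability at most `8 C M⁻³ 2⁻ˢ`. The shells sum
to `16 C M⁻³`, which is small for large `M`.
-/

open MeasureTheory

/-- The paper's bound on `E[φₙ(d)]`. -/
noncomputable def rateBound (C : ℝ) (n : ℕ) (d : ℝ) : ℝ :=
  C * (n : ℝ) ^ (-(1 : ℝ) / 2) * Real.sqrt d * (1 + Real.sqrt d / (Real.sqrt (n : ℝ) * d ^ 2))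

theorem sqrt_div_mul_sq_le_one {t d : ℝ} (ht : 0 < t) (htd : 1 ≤ t ^ 2 * d) :
    Real.sqrt d / (t ^ 3 * d ^ 2) ≤ 1 := by
  have hd : 0 < d := pos_of_mul_pos_right (one_pos.trans_le htd) (by positivity)
  set u := Real.sqrt d
  have hu0 : 0 < u := Real.sqrt_pos.2 hd
  have hud : d = u ^ 2 := (Real.sq_sqrt hd.le).symm
  rw [hud] at htd ⊢
  have htu : 1 ≤ t * u :=
    le_of_pow_le_pow_left₀ two_ne_zero (by positivity) (by rw [one_pow, mul_pow]; exact htd)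
  rw [div_le_one (by positivity)]
  nlinarith [pow_le_pow_left₀ zero_le_one htu 3]

theorem sqrt_two_pow_le (k : ℕ) : Real.sqrt (2 ^ k) ≤ 2 ^ k :=
  (Real.sqrt_le_left (by positivity)).2 (by nlinarith [one_le_pow₀ (M₀ := ℝ) (n := k) one_le_two])

theorem rpow_one_sixth_pow {x : ℝ} (hx : 0 ≤ x) (k : ℕ) :
    (x ^ (1 / 6 : ℝ)) ^ k = x ^ ((k : ℝ) / 6) := by
  rw [← Real.rpow_natCast, ← Real.rpow_mul hx]
  ring_nf

theorem sq_sq_div_rpow_one_sixth (M : ℝ) {n : ℕ} (hn : 1 ≤ n) :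
    ((M / (n : ℝ) ^ (1 / 6 : ℝ)) ^ 2) ^ 2 = M ^ 4 * (n : ℝ) ^ (-(2 : ℝ) / 3) := by
  have ht : 0 < (n : ℝ) ^ (1 / 6 : ℝ) := Real.rpow_pos_of_pos (by exact_mod_cast hn) _
  rw [show (-(2 : ℝ) / 3) = -((4 : ℕ) / 6) by norm_num, Real.rpow_neg n.cast_nonneg,
    ← rpow_one_sixth_pow n.cast_nonneg]
  field_simp

/-- With `t = n^{1/6}` and `a = (M / t)²`, the rate bound at `2ˢ⁺¹ a` is at most `8 · 2ˢ C M / t⁴`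
(using `√(2ˢ⁺¹) ≤ 2ˢ⁺¹`), against the shell threshold `4ˢ a² = 4ˢ M⁴ / t⁴`. -/
theorem two_mul_rateBound_at_shell_le {C M : ℝ} (hC : 0 ≤ C) (hM : 1 ≤ M) {n : ℕ} (hn : 1 ≤ n)
    (s : ℕ) :
    2 * rateBound C n (2 ^ (s + 1) * (M / (n : ℝ) ^ (1 / 6 : ℝ)) ^ 2)
      ≤ 4 ^ s * ((M / (n : ℝ) ^ (1 / 6 : ℝ)) ^ 2) ^ 2 * (8 * C / M ^ 3 * (1 / 2) ^ s) := by
  set t := (n : ℝ) ^ (1 / 6 : ℝ)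
  have ht : 0 < t := Real.rpow_pos_of_pos (by exact_mod_cast hn) _
  have hn_half : (n : ℝ) ^ (-(1 : ℝ) / 2) = (t ^ 3)⁻¹ := by
    rw [rpow_one_sixth_pow n.cast_nonneg, ← Real.rpow_neg n.cast_nonneg]; norm_num
  have hn_sqrt : Real.sqrt n = t ^ 3 := by
    rw [Real.sqrt_eq_rpow, rpow_one_sixth_pow n.cast_nonneg]; norm_num
  set d := 2 ^ (s + 1) * (M / t) ^ 2 with hd
  have htd : 1 ≤ t ^ 2 * d := by
    rw [hd, div_pow, ← mul_assoc, mul_comm (t ^ 2), mul_assoc, mul_div_cancel₀ _ (by positivity)]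
    exact one_le_mul_of_one_le_of_one_le (one_le_pow₀ one_le_two) (one_le_pow₀ hM)
  have hsqrt : Real.sqrt d ≤ 2 ^ (s + 1) * (M / t) := by
    rw [hd, Real.sqrt_mul (by positivity), Real.sqrt_sq (by positivity)]
    gcongr
    exact sqrt_two_pow_le _
  have hM0 : 0 < M := one_pos.trans_le hM
  calc 2 * rateBound C n d
      = 2 * (C * (t ^ 3)⁻¹ * Real.sqrt d * (1 + Real.sqrt d / (t ^ 3 * d ^ 2))) := by
        rw [rateBound, hn_half, hn_sqrt]
    _ ≤ 2 * (C * (t ^ 3)⁻¹ * (2 ^ (s + 1) * (M / t)) * 2) := by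
        gcongr
        linarith [sqrt_div_mul_sq_le_one ht htd]
    _ = 4 ^ s * ((M / t) ^ 2) ^ 2 * (8 * C / M ^ 3 * (1 / 2) ^ s) := by
        rw [show (4 : ℝ) ^ s = 2 ^ s * 2 ^ s by rw [← mul_pow]; norm_num, one_div, inv_pow]
        field_simp
        ring

theorem exists_one_le_with_pow_bounds (u v : ℝ) {ε : ℝ} (hε : 0 < ε) :
    ∃ M : ℝ, 1 ≤ M ∧ u ≤ M ^ 4 ∧ v ≤ ε * M ^ 3 := by
  set M := max 1 (max u (v / ε))
  have hM : 1 ≤ M := le_max_left _ _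
  refine ⟨M, hM, ?_, ?_⟩
  · calc u ≤ M := (le_max_left _ _).trans (le_max_right _ _)
      _ ≤ M ^ 4 := le_self_pow₀ hM (by norm_num)
  · calc v ≤ ε * M := by
          rw [← div_le_iff₀' hε]; exact (le_max_right _ _).trans (le_max_right _ _)
      _ ≤ ε * M ^ 3 := by gcongr; exact le_self_pow₀ hM (by norm_num)

section Peeling

variable {Ω : Type*}

theorem setOf_sq_lt_subset_union {δ Z : Ω → ℝ} {φ : Ω → ℝ → ℝ} (hδ : ∀ ω, 0 ≤ δ ω)
    (hself : ∀ ω, δ ω ^ 2 ≤ φ ω (δ ω) + Z ω) {a z : ℝ} (hz : 2 * z ≤ a ^ 2) :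
    {ω | a ^ 2 < δ ω ^ 2} ⊆ {ω | z < |Z ω|} ∪ {ω | a ≤ δ ω ∧ δ ω ^ 2 ≤ 2 * φ ω (δ ω)} := by
  intro ω (hω : a ^ 2 < δ ω ^ 2)
  by_cases hZ : z < |Z ω|
  · exact Or.inl hZ
  · refine Or.inr ⟨(lt_of_pow_lt_pow_left₀ 2 (hδ ω) hω).le, ?_⟩
    linarith [hself ω, le_abs_self (Z ω), not_lt.1 hZ]

theorem subset_iUnion_dyadic_shell {Y : Ω → ℝ} {ψ : Ω → ℝ → ℝ} (hmono : ∀ ω, Monotone (ψ ω))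
    {a : ℝ} (ha : 0 < a) :
    {ω | a ≤ Y ω ∧ Y ω ^ 2 ≤ ψ ω (Y ω)} ⊆
      ⋃ s : ℕ, {ω | 4 ^ s * a ^ 2 ≤ ψ ω (2 ^ (s + 1) * a)} := by
  rintro ω ⟨haY, hY⟩
  obtain ⟨s, hs_le, hs_lt⟩ := exists_nat_pow_near ((one_le_div ha).2 haY) one_lt_two
  rw [le_div_iff₀ ha] at hs_le
  rw [div_lt_iff₀ ha] at hs_lt
  refine Set.mem_iUnion.2 ⟨s, ?_⟩
  calc 4 ^ s * a ^ 2 = (2 ^ s * a) ^ 2 := by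
        rw [mul_pow, ← pow_mul, mul_comm s, pow_mul]; norm_num
    _ ≤ Y ω ^ 2 := pow_le_pow_left₀ (by positivity) hs_le 2
    _ ≤ ψ ω (Y ω) := hY
    _ ≤ ψ ω (2 ^ (s + 1) * a) := hmono ω hs_lt.le

variable [MeasurableSpace Ω] {P : Measure Ω}

theorem measureReal_iUnion_le_tsum [IsFiniteMeasure P] {A : ℕ → Set Ω} {b : ℕ → ℝ}
    (hb : Summable b) (hA : ∀ s, P.real (A s) ≤ b s) : P.real (⋃ s, A s) ≤ ∑' s, b s := by
  have hb0 : ∀ s, 0 ≤ b s := fun s => measureReal_nonneg.trans (hA s)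
  refine ENNReal.toReal_le_of_le_ofReal (tsum_nonneg hb0) ?_
  calc P (⋃ s, A s) ≤ ∑' s, P (A s) := measure_iUnion_le A
    _ ≤ ∑' s, ENNReal.ofReal (b s) := ENNReal.tsum_le_tsum fun s =>
        (ENNReal.le_ofReal_iff_toReal_le (measure_ne_top P _) (hb0 s)).2 (hA s)
    _ = ENNReal.ofReal (∑' s, b s) := (ENNReal.ofReal_tsum_of_nonneg hb0 hb).symm

theorem measureReal_le_integral_div {f : Ω → ℝ} (hf0 : ∀ ω, 0 ≤ f ω) (hf : Integrable f P)
    {c : ℝ} (hc : 0 < c) : P.real {ω | c ≤ f ω} ≤ (∫ ω, f ω ∂P) / c := by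
  rw [le_div_iff₀' hc]
  exact mul_meas_ge_le_integral_of_nonneg (Filter.Eventually.of_forall hf0) hf c

theorem measureReal_le_tsum_of_sq_le [IsFiniteMeasure P] {Y : Ω → ℝ} {ψ : Ω → ℝ → ℝ}
    (hmono : ∀ ω, Monotone (ψ ω)) (hnonneg : ∀ ω d, 0 ≤ ψ ω d)
    (hint : ∀ d, Integrable (fun ω => ψ ω d) P) {a : ℝ} (ha : 0 < a) {b : ℕ → ℝ}
    (hb : Summable b) (hψb : ∀ s : ℕ, ∫ ω, ψ ω (2 ^ (s + 1) * a) ∂P ≤ 4 ^ s * a ^ 2 * b s) :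
    P.real {ω | a ≤ Y ω ∧ Y ω ^ 2 ≤ ψ ω (Y ω)} ≤ ∑' s, b s := by
  refine (measureReal_mono (subset_iUnion_dyadic_shell hmono ha)).trans
    (measureReal_iUnion_le_tsum hb fun s => ?_)
  have hc : 0 < 4 ^ s * a ^ 2 := by positivity
  calc P.real {ω | 4 ^ s * a ^ 2 ≤ ψ ω (2 ^ (s + 1) * a)}
      ≤ (∫ ω, ψ ω (2 ^ (s + 1) * a) ∂P) / (4 ^ s * a ^ 2) :=
        measureReal_le_integral_div (fun ω => hnonneg ω _) (hint _) hc
    _ ≤ b s := by rw [div_le_iff₀' hc]; exact hψb s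

end Peeling

theorem self_bounding_peeling_rate_general
    {Ω : Type*} [MeasurableSpace Ω] (P : Measure Ω) [IsProbabilityMeasure P]
    (δ Z : ℕ → Ω → ℝ) (φ : ℕ → Ω → ℝ → ℝ)
    (hφint : ∀ n d, Integrable (fun ω => φ n ω d) P)
    (hδnonneg : ∀ n ω, 0 ≤ δ n ω)
    (hφmono : ∀ n ω, Monotone (φ n ω))
    (hφnonneg : ∀ n ω d, 0 ≤ φ n ω d)
    (hself : ∀ n ω, (δ n ω) ^ 2 ≤ φ n ω (δ n ω) + Z n ω)
    (C : ℝ) (hC : 0 < C)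
    (hφexp : ∀ n : ℕ, 1 ≤ n → ∀ d : ℝ, 0 < d →
      ∫ ω, φ n ω d ∂P ≤
        C * (n : ℝ) ^ (-(1 : ℝ) / 2) * Real.sqrt d *
          (1 + Real.sqrt d / (Real.sqrt (n : ℝ) * d ^ 2)))
    (hZ : ∀ ε : ℝ, 0 < ε → ∃ K : ℝ, 0 < K ∧ ∀ n : ℕ, 1 ≤ n →
      (P {ω | K * (n : ℝ) ^ (-(2 : ℝ) / 3) < |Z n ω|}).toReal ≤ ε) :
    ∀ ε : ℝ, 0 < ε → ∃ K : ℝ, 0 < K ∧ ∀ n : ℕ, 1 ≤ n →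
      (P {ω | K * (n : ℝ) ^ (-(2 : ℝ) / 3) < (δ n ω) ^ 2}).toReal ≤ ε := by
  intro ε hε
  obtain ⟨KZ, -, hKZ⟩ := hZ (ε / 2) (half_pos hε)
  obtain ⟨M, hM, hMZ, hMC⟩ := exists_one_le_with_pow_bounds (2 * KZ) (32 * C) hε
  refine ⟨M ^ 4, by positivity, fun n hn => ?_⟩
  set a := (M / (n : ℝ) ^ (1 / 6 : ℝ)) ^ 2
  have ha : 0 < a := by
    have : 0 < (n : ℝ) ^ (1 / 6 : ℝ) := Real.rpow_pos_of_pos (by exact_mod_cast hn) _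
    positivity
  have hpeel := measureReal_le_tsum_of_sq_le (Y := δ n)
    (fun ω => (hφmono n ω).const_mul zero_le_two)
    (fun ω d => mul_nonneg zero_le_two (hφnonneg n ω d)) (fun d => (hφint n d).const_mul 2) ha
    (summable_geometric_two.mul_left (8 * C / M ^ 3)) fun s => by
      rw [integral_const_mul]
      exact (mul_le_mul_of_nonneg_left (hφexp n hn _ (by positivity)) zero_le_two).trans
        (two_mul_rateBound_at_shell_le hC.le hM hn s)
  have hsplit := setOf_sq_lt_subset_union (hδnonneg n) (hself n) (a := a)
    (z := KZ * (n : ℝ) ^ (-(2 : ℝ) / 3)) (by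
      rw [sq_sq_div_rpow_one_sixth M hn, ← mul_assoc]
      exact mul_le_mul_of_nonneg_right hMZ (by positivity))
  change P.real _ ≤ ε
  rw [← sq_sq_div_rpow_one_sixth M hn]
  calc _ ≤ ε / 2 + ∑' s : ℕ, 8 * C / M ^ 3 * (1 / 2) ^ s :=
        (measureReal_mono hsplit).trans ((measureReal_union_le _ _).trans (add_le_add (hKZ n hn) hpeel))
    _ ≤ ε := by
        rw [tsum_mul_left, tsum_geometric_two]
        have : 8 * C / M ^ 3 * 2 ≤ ε / 2 := by
          rw [div_mul_eq_mul_div, div_le_iff₀ (by positivity)]; linarith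
        linarith

/-- If the average calibration error `δₙ²` satisfies the self-bounding
inequality `δₙ² ≤ φₙ(δₙ) + Zₙ` with `Zₙ = O_p(n^{−2/3})` and random nonnegative
nondecreasing functions `φₙ` whose expectations satisfy
`E[φₙ(δ)] ≤ C·n^{−1/2}·√δ·(1 + √δ/(√n·δ²))` for all `δ > 0`, then `δₙ² = O_p(n^{−2/3})`. -/
theorem self_bounding_peeling_rate
    {Ω : Type*} [MeasurableSpace Ω] (P : Measure Ω) [IsProbabilityMeasure P]
    (δ Z : ℕ → Ω → ℝ) (φ : ℕ → Ω → ℝ → ℝ)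
    (hδmeas : ∀ n, Measurable (δ n)) (hZmeas : ∀ n, Measurable (Z n))
    (hφmeas : ∀ n d, Measurable (fun ω => φ n ω d))
    (hφint : ∀ n d, Integrable (fun ω => φ n ω d) P)
    (hδnonneg : ∀ n ω, 0 ≤ δ n ω)
    (hφmono : ∀ n ω, Monotone (φ n ω))
    (hφnonneg : ∀ n ω d, 0 ≤ φ n ω d)
    (hself : ∀ n ω, (δ n ω) ^ 2 ≤ φ n ω (δ n ω) + Z n ω)
    (C : ℝ) (hC : 0 < C)
    (hφexp : ∀ n : ℕ, 1 ≤ n → ∀ d : ℝ, 0 < d →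
      ∫ ω, φ n ω d ∂P ≤
        C * (n : ℝ) ^ (-(1 : ℝ) / 2) * Real.sqrt d *
          (1 + Real.sqrt d / (Real.sqrt (n : ℝ) * d ^ 2)))
    (hZ : ∀ ε : ℝ, 0 < ε → ∃ K : ℝ, 0 < K ∧ ∀ n : ℕ, 1 ≤ n →
      (P {ω | K * (n : ℝ) ^ (-(2 : ℝ) / 3) < |Z n ω|}).toReal ≤ ε) :
    ∀ ε : ℝ, 0 < ε → ∃ K : ℝ, 0 < K ∧ ∀ n : ℕ, 1 ≤ n →
      (P {ω | K * (n : ℝ) ^ (-(2 : ℝ) / 3) < (δ n ω) ^ 2}).toReal ≤ ε :=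
  self_bounding_peeling_rate_general P δ Z φ hφint hδnonneg hφmono hφnonneg hself C hC hφexp hZ
end

section
/- Second-order bias expansion of the AIPW estimator: for fixed nuisance functions α (estimating 1/π_0) and m (estimating μ_0) and binary treatment, the bias E[χ_{α,m}(O)] − ψ_0 of the uncentered AIPW pseudo-outcome equals Σ_{a∈{0,1}} (−1)^{1+a} · E[1(A = a)·(α(a, W) − 1/π_0(a|W))·(μ_0(a, W) − m(a, W))], and hence is bounded in absolute value by Σ_a ‖α(a,·) − π_0^{-1}(a,·)‖_{L²(π_0(a|·)dP_W)} · ‖m(a,·) − μ_0(a,·)‖_{L²(π_0(a|·)dP_W)}. -/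
open MeasureTheory

/-!
Everything splits over the two treatment arms. In arm `a`, write `I = 1(A = a)`. Because `μ₀` is
the regression of `Y` on `(A, W)`, the correction `I·α·(Y − m)` has the same mean as
`I·α·(μ₀ − m)`; because `π₀` is the propensity score, `μ₀ − m` has the same mean as
`I·π₀⁻¹·(μ₀ − m)`. Subtracting leaves the mean of `I·(α − π₀⁻¹)·(μ₀ − m)`. Conditioning this on
`W` once more replaces `I` by the weight `π₀(a|W)`, and Cauchy–Schwarz in `L²(π₀(a|·) dP_W)`
bounds it.
-/

def IsBoundedMeasurable {X : Type*} [MeasurableSpace X] (f : X → ℝ) : Prop :=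
  Measurable f ∧ ∃ c, ∀ x, |f x| ≤ c

namespace IsBoundedMeasurable

variable {X Z : Type*} [MeasurableSpace X] [MeasurableSpace Z] {f g : X → ℝ}

theorem sub (hf : IsBoundedMeasurable f) (hg : IsBoundedMeasurable g) :
    IsBoundedMeasurable fun x => f x - g x := by
  obtain ⟨hf, C, hC⟩ := hf
  obtain ⟨hg, D, hD⟩ := hg
  exact ⟨hf.sub hg, C + D, fun x => (abs_sub _ _).trans (add_le_add (hC x) (hD x))⟩

theorem mul (hf : IsBoundedMeasurable f) (hg : IsBoundedMeasurable g) :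
    IsBoundedMeasurable fun x => f x * g x := by
  obtain ⟨hf, C, hC⟩ := hf
  obtain ⟨hg, D, hD⟩ := hg
  refine ⟨hf.mul hg, C * D, fun x => ?_⟩
  rw [abs_mul]
  exact mul_le_mul (hC x) (hD x) (abs_nonneg _) ((abs_nonneg _).trans (hC x))

theorem comp {g : Z → ℝ} (hg : IsBoundedMeasurable g) {W : X → Z} (hW : Measurable W) :
    IsBoundedMeasurable fun x => g (W x) :=
  ⟨hg.1.comp hW, hg.2.imp fun _ hC x => hC (W x)⟩

theorem inv_of_le {η : ℝ} (hf : Measurable f) (hη : 0 < η) (hηf : ∀ x, η ≤ f x) :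
    IsBoundedMeasurable fun x => (f x)⁻¹ :=
  ⟨hf.inv, η⁻¹, fun x => by
    rw [abs_of_pos (inv_pos.2 (hη.trans_le (hηf x)))]
    exact inv_anti₀ hη (hηf x)⟩

theorem sqrt (hf : IsBoundedMeasurable f) : IsBoundedMeasurable fun x => √(f x) := by
  obtain ⟨hf, C, hC⟩ := hf
  refine ⟨Real.continuous_sqrt.measurable.comp hf, √C, fun x => ?_⟩
  rw [abs_of_nonneg (Real.sqrt_nonneg _)]
  exact Real.sqrt_le_sqrt ((le_abs_self _).trans (hC x))

theorem ite_eq_one_zero {B : Type*} [MeasurableSpace B] [MeasurableSingletonClass B]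
    [DecidableEq B] {A : X → B} (hA : Measurable A) (b : B) :
    IsBoundedMeasurable fun x => if A x = b then (1 : ℝ) else 0 :=
  ⟨Measurable.ite (hA (measurableSet_singleton b)) measurable_const measurable_const, 1,
    fun x => by dsimp only; split_ifs <;> norm_num⟩

theorem memLp (hf : IsBoundedMeasurable f) (p : ENNReal) (μ : Measure X) [IsFiniteMeasure μ] :
    MemLp f p μ := by
  obtain ⟨hf, C, hC⟩ := hf
  exact MemLp.of_bound hf.aestronglyMeasurable C (ae_of_all _ hC)

theorem integrable (hf : IsBoundedMeasurable f) (μ : Measure X) [IsFiniteMeasure μ] :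
    Integrable f μ :=
  memLp_one_iff_integrable.1 (hf.memLp 1 μ)

theorem integrable_mul (hf : IsBoundedMeasurable f) {μ : Measure X} (hg : Integrable g μ) :
    Integrable (fun x => f x * g x) μ := by
  obtain ⟨hf, C, hC⟩ := hf
  exact hg.bdd_mul hf.aestronglyMeasurable (ae_of_all _ hC)

end IsBoundedMeasurable

section CauchySchwarz

variable {X : Type*} [MeasurableSpace X] {μ : Measure X}

theorem abs_integral_mul_le_sqrt_mul_sqrt {f g : X → ℝ} (hf : MemLp f 2 μ) (hg : MemLp g 2 μ) :
    |∫ x, f x * g x ∂μ| ≤ √(∫ x, f x ^ 2 ∂μ) * √(∫ x, g x ^ 2 ∂μ) := by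
  rw [← ENNReal.ofReal_ofNat] at hf hg
  have holder := integral_mul_norm_le_Lp_mul_Lq Real.HolderConjugate.two_two hf hg
  simp only [Real.rpow_two, Real.norm_eq_abs, sq_abs, ← Real.sqrt_eq_rpow] at holder
  calc |∫ x, f x * g x ∂μ| ≤ ∫ x, |f x * g x| ∂μ := abs_integral_le_integral_abs
    _ = ∫ x, |f x| * |g x| ∂μ := by simp only [abs_mul]
    _ ≤ _ := holder

theorem abs_integral_weight_mul_le_sqrt_mul_sqrt [IsFiniteMeasure μ] {w f g : X → ℝ}
    (hw : IsBoundedMeasurable w) (hw_nonneg : ∀ x, 0 ≤ w x)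
    (hf : IsBoundedMeasurable f) (hg : IsBoundedMeasurable g) :
    |∫ x, w x * (f x * g x) ∂μ| ≤
      √(∫ x, w x * f x ^ 2 ∂μ) * √(∫ x, w x * g x ^ 2 ∂μ) := by
  have key := abs_integral_mul_le_sqrt_mul_sqrt
    ((hw.sqrt.mul hf).memLp 2 μ) ((hw.sqrt.mul hg).memLp 2 μ)
  have hprod (x : X) : √(w x) * f x * (√(w x) * g x) = w x * (f x * g x) := by
    linear_combination (f x * g x) * Real.mul_self_sqrt (hw_nonneg x)
  simpa only [hprod, mul_pow, Real.sq_sqrt (hw_nonneg _)] using key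

end CauchySchwarz

section TreatmentArm

variable {Ω 𝓦 : Type*}

def aipwArm (W : Ω → 𝓦) (I Y : Ω → ℝ) (α m : 𝓦 → ℝ) (ω : Ω) : ℝ :=
  m (W ω) + I ω * α (W ω) * (Y ω - m (W ω))

theorem aipw_eq_aipwArm_sub_aipwArm (W : Ω → 𝓦) (A : Ω → Bool) (Y : Ω → ℝ)
    (α m : Bool → 𝓦 → ℝ) (ω : Ω) :
    m true (W ω) - m false (W ω) +
        ((if A ω then α true (W ω) else 0) - (if A ω then 0 else α false (W ω))) *
          (Y ω - m (A ω) (W ω)) =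
      aipwArm W (fun ω => if A ω = true then 1 else 0) Y (α true) (m true) ω -
        aipwArm W (fun ω => if A ω = false then 1 else 0) Y (α false) (m false) ω := by
  simp only [aipwArm]
  cases A ω <;> simp only [Bool.false_eq_true, Bool.true_eq_false, if_true, if_false] <;> ring

variable [MeasurableSpace Ω] [MeasurableSpace 𝓦]

/-- `π ∘ W` is a version of `E[I | W]`, tested against bounded measurable functions of `W`. -/
def IsPropensityScore (P : Measure Ω) (W : Ω → 𝓦) (I : Ω → ℝ) (π : 𝓦 → ℝ) : Prop :=
  ∀ g : 𝓦 → ℝ, Measurable g → (∃ c, ∀ w, |g w| ≤ c) →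
    ∫ ω, I ω * g (W ω) ∂P = ∫ ω, π (W ω) * g (W ω) ∂P

/-- For an indicator `I`, `μ ∘ W` is a version of `E[Y | W, I = 1]`. -/
def IsArmRegression (P : Measure Ω) (W : Ω → 𝓦) (I Y : Ω → ℝ) (μ : 𝓦 → ℝ) : Prop :=
  ∀ g : 𝓦 → ℝ, Measurable g → (∃ c, ∀ w, |g w| ≤ c) →
    ∫ ω, I ω * g (W ω) * Y ω ∂P = ∫ ω, I ω * g (W ω) * μ (W ω) ∂P

variable {P : Measure Ω} [IsFiniteMeasure P] {W : Ω → 𝓦} {I Y : Ω → ℝ} {π μ α m : 𝓦 → ℝ}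

theorem integrable_aipwArm (hW : Measurable W) (hI : IsBoundedMeasurable I) (hY : Integrable Y P)
    (hα : IsBoundedMeasurable α) (hm : IsBoundedMeasurable m) :
    Integrable (aipwArm W I Y α m) P :=
  ((hm.comp hW).integrable P).add
    ((hI.mul (hα.comp hW)).integrable_mul (hY.sub ((hm.comp hW).integrable P)))

theorem IsPropensityScore.integral_sub_mul_eq_zero (hπcond : IsPropensityScore P W I π)
    (hW : Measurable W) (hI : IsBoundedMeasurable I) (hπ : IsBoundedMeasurable π)
    {g : 𝓦 → ℝ} (hg : IsBoundedMeasurable g) :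
    ∫ ω, (I ω - π (W ω)) * g (W ω) ∂P = 0 := by
  simp only [sub_mul]
  rw [integral_sub ((hI.mul (hg.comp hW)).integrable P) (((hπ.mul hg).comp hW).integrable P),
    hπcond g hg.1 hg.2, sub_self]

theorem IsArmRegression.integral_mul_sub_eq_zero (hμcond : IsArmRegression P W I Y μ)
    (hW : Measurable W) (hI : IsBoundedMeasurable I) (hY : Integrable Y P)
    (hμ : IsBoundedMeasurable μ) {g : 𝓦 → ℝ} (hg : IsBoundedMeasurable g) :
    ∫ ω, I ω * g (W ω) * (Y ω - μ (W ω)) ∂P = 0 := by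
  have hIg := hI.mul (hg.comp hW)
  simp only [mul_sub]
  rw [integral_sub (hIg.integrable_mul hY) ((hIg.mul (hμ.comp hW)).integrable P),
    hμcond g hg.1 hg.2, sub_self]

theorem integral_aipwArm_sub_integral {η : ℝ}
    (hπcond : IsPropensityScore P W I π) (hμcond : IsArmRegression P W I Y μ)
    (hW : Measurable W) (hI : IsBoundedMeasurable I) (hY : Integrable Y P)
    (hπ : IsBoundedMeasurable π) (hη : 0 < η) (hπη : ∀ w, η ≤ π w)
    (hμ : IsBoundedMeasurable μ) (hα : IsBoundedMeasurable α) (hm : IsBoundedMeasurable m) :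
    ∫ ω, aipwArm W I Y α m ω ∂P - ∫ ω, μ (W ω) ∂P =
      ∫ ω, I ω * (α (W ω) - (π (W ω))⁻¹) * (μ (W ω) - m (W ω)) ∂P := by
  have hπinv := IsBoundedMeasurable.inv_of_le hπ.1 hη hπη
  have hweight := hπinv.mul (hμ.sub hm)
  -- writing `μ − m = π · π⁻¹ · (μ − m)`, the gap is a sum of two centred terms
  have hgap (ω : Ω) : aipwArm W I Y α m ω - μ (W ω) -
      I ω * (α (W ω) - (π (W ω))⁻¹) * (μ (W ω) - m (W ω)) =
      I ω * α (W ω) * (Y ω - μ (W ω)) +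
        (I ω - π (W ω)) * ((π (W ω))⁻¹ * (μ (W ω) - m (W ω))) := by
    have hπW : π (W ω) ≠ 0 := (hη.trans_le (hπη (W ω))).ne'
    unfold aipwArm
    field_simp
    ring
  have hμW := (hμ.comp hW).integrable P
  have harm_sub : Integrable (fun ω => aipwArm W I Y α m ω - μ (W ω)) P :=
    (integrable_aipwArm hW hI hY hα hm).sub hμW
  have hproduct : Integrable
      (fun ω => I ω * (α (W ω) - (π (W ω))⁻¹) * (μ (W ω) - m (W ω))) P :=
    ((hI.mul ((hα.sub hπinv).comp hW)).mul ((hμ.sub hm).comp hW)).integrable P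
  have hY_centred : Integrable (fun ω => I ω * α (W ω) * (Y ω - μ (W ω))) P :=
    (hI.mul (hα.comp hW)).integrable_mul (hY.sub hμW)
  have hπ_centred : Integrable
      (fun ω => (I ω - π (W ω)) * ((π (W ω))⁻¹ * (μ (W ω) - m (W ω)))) P :=
    ((hI.sub (hπ.comp hW)).mul (hweight.comp hW)).integrable P
  rw [← sub_eq_zero, ← integral_sub (integrable_aipwArm hW hI hY hα hm) hμW,
    ← integral_sub harm_sub hproduct]
  simp only [hgap]
  rw [integral_add hY_centred hπ_centred, hμcond.integral_mul_sub_eq_zero hW hI hY hμ hα,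
    hπcond.integral_sub_mul_eq_zero hW hI hπ hweight, add_zero]

theorem IsPropensityScore.abs_integral_mul_mul_le (hπcond : IsPropensityScore P W I π)
    (hW : Measurable W) (hπ : IsBoundedMeasurable π) (hπ_nonneg : ∀ w, 0 ≤ π w)
    {f g : 𝓦 → ℝ} (hf : IsBoundedMeasurable f) (hg : IsBoundedMeasurable g) :
    |∫ ω, I ω * f (W ω) * g (W ω) ∂P| ≤
      √(∫ ω, π (W ω) * f (W ω) ^ 2 ∂P) * √(∫ ω, π (W ω) * g (W ω) ^ 2 ∂P) := by
  have hfg := hf.mul hg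
  simp only [mul_assoc]
  rw [hπcond _ hfg.1 hfg.2]
  exact abs_integral_weight_mul_le_sqrt_mul_sqrt (hπ.comp hW) (fun ω => hπ_nonneg (W ω))
    (hf.comp hW) (hg.comp hW)

end TreatmentArm

/-- Second-order bias expansion of the AIPW estimator: for fixed nuisance
functions `α` (estimating `1/π₀`) and `m` (estimating `μ₀`) and binary treatment, the bias
`E[χ_{α,m}(O)] − ψ₀` of the AIPW pseudo-outcome equals
`Σ_{a∈{0,1}} (−1)^{1+a}·E[1(A=a)·(α(a,W) − 1/π₀(a|W))·(μ₀(a,W) − m(a,W))]`, and hence is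
bounded in absolute value by the sum over arms of the products of the weighted `L²` norms
of the nuisance errors. -/
theorem aipw_second_order_bias_expansion
    {Ω 𝓦 : Type*} [MeasurableSpace Ω] [MeasurableSpace 𝓦]
    (P : Measure Ω) [IsProbabilityMeasure P]
    (W : Ω → 𝓦) (A : Ω → Bool) (Y : Ω → ℝ)
    (hW : Measurable W) (hA : Measurable A) (hY : Measurable Y)
    (CY : ℝ) (hYbd : ∀ ω, |Y ω| ≤ CY)
    (π0 μ0 α m : Bool → 𝓦 → ℝ)
    (hπ0meas : ∀ a, Measurable (π0 a)) (hμ0meas : ∀ a, Measurable (μ0 a))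
    (hαmeas : ∀ a, Measurable (α a)) (hmmeas : ∀ a, Measurable (m a))
    (η : ℝ) (hη : 0 < η) (hπ0bd : ∀ a w, η ≤ π0 a w ∧ π0 a w ≤ 1 - η)
    (hμ0bd : ∃ c, ∀ a w, |μ0 a w| ≤ c)
    (hαbd : ∃ c, ∀ a w, |α a w| ≤ c)
    (hmbd : ∃ c, ∀ a w, |m a w| ≤ c)
    -- `π0 a` is the conditional probability of `A = a` given `W`
    (hπ0cond : ∀ a : Bool, ∀ g : 𝓦 → ℝ, Measurable g → (∃ c, ∀ w, |g w| ≤ c) →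
      ∫ ω, (if A ω = a then (1 : ℝ) else 0) * g (W ω) ∂P =
        ∫ ω, π0 a (W ω) * g (W ω) ∂P)
    -- `μ0 a` is the conditional expectation of `Y` given `A = a` and `W`
    (hμ0cond : ∀ a : Bool, ∀ g : 𝓦 → ℝ, Measurable g → (∃ c, ∀ w, |g w| ≤ c) →
      ∫ ω, (if A ω = a then (1 : ℝ) else 0) * g (W ω) * Y ω ∂P =
        ∫ ω, (if A ω = a then (1 : ℝ) else 0) * g (W ω) * μ0 a (W ω) ∂P)
    (ψ0 : ℝ) (hψ0 : ψ0 = ∫ ω, (μ0 true (W ω) - μ0 false (W ω)) ∂P)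
    (χ : Ω → ℝ)
    (hχ : ∀ ω, χ ω = m true (W ω) - m false (W ω) +
      ((if A ω then α true (W ω) else 0) - (if A ω then 0 else α false (W ω))) *
        (Y ω - m (A ω) (W ω))) :
    ((∫ ω, χ ω ∂P) - ψ0 =
      (∫ ω, (if A ω then (1 : ℝ) else 0) * (α true (W ω) - (π0 true (W ω))⁻¹) *
          (μ0 true (W ω) - m true (W ω)) ∂P) -
        ∫ ω, (if A ω then (0 : ℝ) else 1) * (α false (W ω) - (π0 false (W ω))⁻¹) *
          (μ0 false (W ω) - m false (W ω)) ∂P) ∧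
    |(∫ ω, χ ω ∂P) - ψ0| ≤
      Real.sqrt (∫ ω, π0 true (W ω) * (α true (W ω) - (π0 true (W ω))⁻¹) ^ 2 ∂P) *
          Real.sqrt (∫ ω, π0 true (W ω) * (m true (W ω) - μ0 true (W ω)) ^ 2 ∂P) +
        Real.sqrt (∫ ω, π0 false (W ω) * (α false (W ω) - (π0 false (W ω))⁻¹) ^ 2 ∂P) *
          Real.sqrt (∫ ω, π0 false (W ω) * (m false (W ω) - μ0 false (W ω)) ^ 2 ∂P) := by
  have hπ (a : Bool) : IsBoundedMeasurable (π0 a) :=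
    ⟨hπ0meas a, 1, fun w => abs_le.2 ⟨by linarith [hπ0bd a w], by linarith [hπ0bd a w]⟩⟩
  have hμ (a : Bool) : IsBoundedMeasurable (μ0 a) := ⟨hμ0meas a, hμ0bd.imp fun _ h => h a⟩
  have hα (a : Bool) : IsBoundedMeasurable (α a) := ⟨hαmeas a, hαbd.imp fun _ h => h a⟩
  have hm (a : Bool) : IsBoundedMeasurable (m a) := ⟨hmmeas a, hmbd.imp fun _ h => h a⟩
  have hYint : Integrable Y P := IsBoundedMeasurable.integrable ⟨hY, CY, hYbd⟩ P
  have hI (a : Bool) := IsBoundedMeasurable.ite_eq_one_zero hA a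
  have hI_false (ω : Ω) : (if A ω = false then (1 : ℝ) else 0) = if A ω then 0 else 1 := by
    cases A ω <;> rfl
  have hbias (a : Bool) := integral_aipwArm_sub_integral (hπ0cond a) (hμ0cond a) hW (hI a) hYint
    (hπ a) hη (fun w => (hπ0bd a w).1) (hμ a) (hα a) (hm a)
  have hbound (a : Bool) := IsPropensityScore.abs_integral_mul_mul_le (hπ0cond a) hW (hπ a)
    (fun w => hη.le.trans (hπ0bd a w).1)
    ((hα a).sub (.inv_of_le (hπ0meas a) hη fun w => (hπ0bd a w).1)) ((hμ a).sub (hm a))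
  simp only [sub_sq_comm (μ0 _ _)] at hbound
  suffices hsplit : (∫ ω, χ ω ∂P) - ψ0 =
      (∫ ω, aipwArm W (fun ω => if A ω = true then 1 else 0) Y (α true) (m true) ω ∂P -
        ∫ ω, μ0 true (W ω) ∂P) -
      (∫ ω, aipwArm W (fun ω => if A ω = false then 1 else 0) Y (α false) (m false) ω ∂P -
        ∫ ω, μ0 false (W ω) ∂P) by
    rw [hsplit, hbias true, hbias false]
    simp only [hI_false, true_and]
    exact (abs_sub _ _).trans
      (add_le_add (hbound true) (by simpa only [hI_false] using hbound false))
  rw [integral_congr_ae (ae_of_all _ fun ω => (hχ ω).trans (aipw_eq_aipwArm_sub_aipwArm ..)),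
    hψ0, integral_sub (integrable_aipwArm hW (hI _) hYint (hα _) (hm _))
      (integrable_aipwArm hW (hI _) hYint (hα _) (hm _)),
    integral_sub (((hμ true).comp hW).integrable P) (((hμ false).comp hW).integrable P)]
  exact sub_sub_sub_comm _ _ _ _
end
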